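/- Suppose the moments satisfy μ_k(z) = δ_z^k(μ_0)(z) for every k ≥ 0, where δ_z = z·d/dz and μ_0 is smooth on (0,∞), and suppose W_n(μ_0)(z) ≠ 0 for all relevant n on an open interval of (0,∞). Then the recurrence coefficients can be expressed as a_n²(z) = δ_z²(ln W_n(μ_0))(z) and b_n(z) = δ_z(ln(W_{n+1}(μ_0)/W_n(μ_0)))(z). -/

import Mathlib

/-- The Euler operator `δ_z = z · d/dz` acting on functions `ℝ → ℝ`. -/
noncomputable def eulerOp (f : ℝ → ℝ) : ℝ → ℝ := fun z => z * deriv f z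

/-- The `n × n` Wronskian-type determinant `W_n(ψ)(z) = det[δ_z^{i+j}(ψ)(z)]_{i,j=0}^{n-1}`,
with `W_0 = 1`. -/
noncomputable def Wdet (n : ℕ) (ψ : ℝ → ℝ) (z : ℝ) : ℝ :=
  Matrix.det (Matrix.of fun i j : Fin n => eulerOp^[(i : ℕ) + (j : ℕ)] ψ z)

/-- The Hankel determinant `Δ_n(z) = det[μ_{i+j}(z)]_{i,j=0}^{n-1}`, with `Δ_0 = 1`. -/
noncomputable def hankel (μ : ℕ → ℝ → ℝ) (n : ℕ) (z : ℝ) : ℝ :=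
  Matrix.det (Matrix.of fun i j : Fin n => μ ((i : ℕ) + (j : ℕ)) z)

/-- The shifted Hankel determinant `Δ̃_n(z)`: the determinant of `[μ_{i+j}(z)]_{i,j=0}^{n-1}`
with its last column `(μ_{i+n-1})_i` replaced by `(μ_{i+n})_i`, and `Δ̃_0 = 0`. -/
noncomputable def hankelShift (μ : ℕ → ℝ → ℝ) : ℕ → ℝ → ℝ
  | 0, _ => 0
  | (m + 1), z => Matrix.det (Matrix.of fun i j : Fin (m + 1) =>
      if (j : ℕ) = m then μ ((i : ℕ) + m + 1) z else μ ((i : ℕ) + (j : ℕ)) z)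

/-- The recurrence coefficient `a_n²(z) = Δ_{n+1}(z) Δ_{n-1}(z) / Δ_n(z)²`, with
`a_0² = 0` (since `Δ_{-1} = 0`). -/
noncomputable def aSq (μ : ℕ → ℝ → ℝ) : ℕ → ℝ → ℝ
  | 0, _ => 0
  | (m + 1), z => hankel μ (m + 2) z * hankel μ m z / (hankel μ (m + 1) z) ^ 2

/-- The recurrence coefficient `b_n(z) = Δ̃_{n+1}(z)/Δ_{n+1}(z) − Δ̃_n(z)/Δ_n(z)`. -/
noncomputable def bCoef (μ : ℕ → ℝ → ℝ) (n : ℕ) (z : ℝ) : ℝ :=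
  hankelShift μ (n + 1) z / hankel μ (n + 1) z - hankelShift μ n z / hankel μ n z


open Matrix Finset

theorem hasDerivAt_det {n : ℕ} (A : ℝ → Matrix (Fin n) (Fin n) ℝ)
    (A' : Matrix (Fin n) (Fin n) ℝ) (z : ℝ)
    (h : ∀ i j, HasDerivAt (fun t => A t i j) (A' i j) z) :
    HasDerivAt (fun t => (A t).det) (∑ k, ((A z).updateRow k (A' k)).det) z := by
  have key : ∀ σ : Equiv.Perm (Fin n),
      HasDerivAt (fun t => (Equiv.Perm.sign σ : ℝ) * ∏ i, A t (σ i) i)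
        ((Equiv.Perm.sign σ : ℝ) *
          ∑ i, (∏ j ∈ Finset.univ.erase i, A z (σ j) j) * A' (σ i) i) z := by
    intro σ
    have hp : HasDerivAt (fun t => ∏ i, A t (σ i) i)
        (∑ i, (∏ j ∈ Finset.univ.erase i, A z (σ j) j) • A' (σ i) i) z :=
      HasDerivAt.fun_finsetProd (fun i _ => h (σ i) i)
    simpa [smul_eq_mul] using hp.const_mul ((Equiv.Perm.sign σ : ℝ))
  have hsum : HasDerivAt (fun t => ∑ σ : Equiv.Perm (Fin n),
      (Equiv.Perm.sign σ : ℝ) * ∏ i, A t (σ i) i)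
      (∑ σ : Equiv.Perm (Fin n), (Equiv.Perm.sign σ : ℝ) *
        ∑ i, (∏ j ∈ Finset.univ.erase i, A z (σ j) j) * A' (σ i) i) z :=
    HasDerivAt.fun_sum (fun σ _ => key σ)
  have e1 : (fun t => (A t).det) = (fun t => ∑ σ : Equiv.Perm (Fin n),
      (Equiv.Perm.sign σ : ℝ) * ∏ i, A t (σ i) i) := by
    funext t; exact Matrix.det_apply' (A t)
  rw [e1]
  convert hsum using 1
  calc ∑ k, ((A z).updateRow k (A' k)).det
      = ∑ k, ∑ σ : Equiv.Perm (Fin n),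
          (Equiv.Perm.sign σ : ℝ) * ∏ i, ((A z).updateRow k (A' k)) (σ i) i := by
        simp only [Matrix.det_apply']
    _ = ∑ σ : Equiv.Perm (Fin n), ∑ k,
          (Equiv.Perm.sign σ : ℝ) * ∏ i, ((A z).updateRow k (A' k)) (σ i) i :=
        Finset.sum_comm
    _ = ∑ σ : Equiv.Perm (Fin n), (Equiv.Perm.sign σ : ℝ) *
          ∑ i, (∏ j ∈ Finset.univ.erase i, A z (σ j) j) * A' (σ i) i := by
        refine Finset.sum_congr rfl fun σ _ => ?_
        rw [← Finset.mul_sum]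
        congr 1
        rw [← Equiv.sum_comp σ (fun k => ∏ i, ((A z).updateRow k (A' k)) (σ i) i)]
        refine Finset.sum_congr rfl fun i₀ _ => ?_
        rw [← Finset.mul_prod_erase Finset.univ _ (Finset.mem_univ i₀), mul_comm]
        congr 1
        · refine Finset.prod_congr rfl fun j hj => ?_
          have hne : σ j ≠ σ i₀ := fun hc =>
            (Finset.mem_erase.mp hj).1 (σ.injective hc)
          exact congrFun (Matrix.updateRow_ne hne) j
        · exact congrFun Matrix.updateRow_self i₀

open Matrix Finset

theorem mul_updateColumn' {k : ℕ} (M N : Matrix (Fin k) (Fin k) ℝ) (j : Fin k)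
    (c : Fin k → ℝ) : M * N.updateCol j c = (M * N).updateCol j (M.mulVec c) := by
  ext i l
  by_cases h : l = j <;>
    simp [Matrix.mul_apply, Matrix.updateCol_apply, h, Matrix.mulVec, dotProduct]

theorem updateColumn_comm' {k : ℕ} (M : Matrix (Fin k) (Fin k) ℝ) {p q : Fin k}
    (hpq : p ≠ q) (c d : Fin k → ℝ) :
    (M.updateCol p c).updateCol q d = (M.updateCol q d).updateCol p c := by
  ext i l
  rcases eq_or_ne l q with rfl | hq
  · rw [Matrix.updateCol_self, Matrix.updateCol_ne hpq.symm, Matrix.updateCol_self]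
  · rcases eq_or_ne l p with rfl | hp
    · rw [Matrix.updateCol_ne hq, Matrix.updateCol_self, Matrix.updateCol_self]
    · rw [Matrix.updateCol_ne hq, Matrix.updateCol_ne hp, Matrix.updateCol_ne hp,
        Matrix.updateCol_ne hq]

theorem jacobi_last_two {m : ℕ} (A : Matrix (Fin (m+2)) (Fin (m+2)) ℝ) (hA : A.det ≠ 0) :
    A.det * (A.submatrix (fun i : Fin m => Fin.castSucc (Fin.castSucc i))
        (fun j : Fin m => Fin.castSucc (Fin.castSucc j))).det
      = (A.submatrix (Fin.succAbove ((Fin.last m).castSucc))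
            (Fin.succAbove ((Fin.last m).castSucc))).det
          * (A.submatrix (Fin.succAbove (Fin.last (m+1)))
            (Fin.succAbove (Fin.last (m+1)))).det
        - (A.submatrix (Fin.succAbove (Fin.last (m+1)))
            (Fin.succAbove ((Fin.last m).castSucc))).det
          * (A.submatrix (Fin.succAbove ((Fin.last m).castSucc))
            (Fin.succAbove (Fin.last (m+1)))).det := by
  set p : Fin (m+2) := (Fin.last m).castSucc with hp_def
  set q : Fin (m+2) := Fin.last (m+1) with hq_def
  have hpv : (p : ℕ) = m := rfl
  have hqv : (q : ℕ) = m + 1 := rfl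
  have hpq : p ≠ q := by
    intro h; have := congrArg Fin.val h; rw [hpv, hqv] at this; omega
  set adj := A.adjugate with hadj_def
  set X := ((1 : Matrix (Fin (m+2)) (Fin (m+2)) ℝ).updateCol p
      (fun i => adj i p)).updateCol q (fun i => adj i q) with hX_def
  set e : Fin m ⊕ Fin 2 ≃ Fin (m+2) := finSumFinEquiv with he_def
  have he0 : e (Sum.inr 0) = p := by
    apply Fin.val_injective; simp [he_def, hpv]
  have he1 : e (Sum.inr 1) = q := by
    apply Fin.val_injective; simp [he_def, hqv]
  have hel : ∀ i : Fin m, ((e (Sum.inl i) : Fin (m+2)) : ℕ) = (i : ℕ) := by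
    intro i; simp [he_def]
  have help : ∀ i : Fin m, e (Sum.inl i) ≠ p := by
    intro i h; have := congrArg Fin.val h; rw [hel, hpv] at this; omega
  have helq : ∀ i : Fin m, e (Sum.inl i) ≠ q := by
    intro i h; have := congrArg Fin.val h; rw [hel, hqv] at this; omega
  -- determinant of X
  have hXblocks : X.submatrix e e = Matrix.fromBlocks 1
      (Matrix.of fun i j => X (e (Sum.inl i)) (e (Sum.inr j)))
      0 (Matrix.of fun i j => X (e (Sum.inr i)) (e (Sum.inr j))) := by
    ext r c
    rcases r with i | i <;> rcases c with j | j <;>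
      simp only [Matrix.submatrix_apply, Matrix.fromBlocks_apply₁₁,
        Matrix.fromBlocks_apply₁₂, Matrix.fromBlocks_apply₂₁, Matrix.fromBlocks_apply₂₂,
        Matrix.of_apply]
    · rw [hX_def, Matrix.updateCol_ne (helq j), Matrix.updateCol_ne (help j)]
      simp [Matrix.one_apply, e.injective.eq_iff]
    · rw [hX_def, Matrix.updateCol_ne (helq j), Matrix.updateCol_ne (help j)]
      have : e (Sum.inr i) ≠ e (Sum.inl j) := by
        simp [e.injective.eq_iff]
      simp [Matrix.one_apply, this]
  have hdetX : X.det = adj p p * adj q q - adj p q * adj q p := by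
    rw [← Matrix.det_submatrix_equiv_self e, hXblocks, Matrix.det_fromBlocks_zero₂₁,
      Matrix.det_one, one_mul, Matrix.det_fin_two]
    simp only [Matrix.of_apply, he0, he1]
    rw [hX_def]
    rw [Matrix.updateCol_self, Matrix.updateCol_ne hpq, Matrix.updateCol_self,
      Matrix.updateCol_self, Matrix.updateCol_ne hpq, Matrix.updateCol_self]
  -- columns of A * adjugate
  have hcol : ∀ r : Fin (m+2), A.mulVec (fun i => adj i r) = A.det • (Pi.single r 1 : Fin (m+2) → ℝ) := by
    intro r; funext i
    have h2 := congrFun (congrFun (Matrix.mul_adjugate A) i) r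
    simp only [Matrix.mul_apply, Matrix.smul_apply, Matrix.one_apply, smul_eq_mul] at h2
    simp only [Matrix.mulVec, dotProduct, hadj_def, h2, Pi.smul_apply,
      Pi.single_apply, smul_eq_mul]
  have hAX : A * X = (A.updateCol p (A.det • (Pi.single p 1 : Fin (m+2) → ℝ))).updateCol q
      (A.det • (Pi.single q 1 : Fin (m+2) → ℝ)) := by
    rw [hX_def, mul_updateColumn', mul_updateColumn', Matrix.mul_one, hcol, hcol]
  -- inner determinant
  have hfun : (fun i : Fin m => e (Sum.inl i))
      = (fun i : Fin m => Fin.castSucc (Fin.castSucc i)) := by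
    funext i; apply Fin.val_injective; simp [hel i]
  set Y := (A.updateCol p (Pi.single p 1 : Fin (m+2) → ℝ)).updateCol q (Pi.single q 1 : Fin (m+2) → ℝ) with hY_def
  have hInner : Y.det = (A.submatrix (fun i : Fin m => Fin.castSucc (Fin.castSucc i))
      (fun j : Fin m => Fin.castSucc (Fin.castSucc j))).det := by
    rw [← Matrix.det_submatrix_equiv_self e]
    have hYb : Y.submatrix e e = Matrix.fromBlocks
        (A.submatrix (fun i : Fin m => e (Sum.inl i)) (fun j : Fin m => e (Sum.inl j))) 0
        (Matrix.of fun i j => Y (e (Sum.inr i)) (e (Sum.inl j))) 1 := by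
      ext r c
      rcases r with i | i <;> rcases c with j | j <;>
        simp only [Matrix.submatrix_apply, Matrix.fromBlocks_apply₁₁,
          Matrix.fromBlocks_apply₁₂, Matrix.fromBlocks_apply₂₁, Matrix.fromBlocks_apply₂₂,
          Matrix.of_apply]
      · rw [hY_def, Matrix.updateCol_ne (helq j), Matrix.updateCol_ne (help j)]
      · fin_cases j
        · show Y (e (Sum.inl i)) (e (Sum.inr 0)) = 0
          rw [he0, hY_def, Matrix.updateCol_ne hpq, Matrix.updateCol_self,
            Pi.single_eq_of_ne (help i)]
        · show Y (e (Sum.inl i)) (e (Sum.inr 1)) = 0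
          rw [he1, hY_def, Matrix.updateCol_self, Pi.single_eq_of_ne (helq i)]
      · fin_cases i <;> fin_cases j
        · show Y (e (Sum.inr 0)) (e (Sum.inr 0)) = (1 : Matrix (Fin 2) (Fin 2) ℝ) 0 0
          rw [he0, hY_def, Matrix.updateCol_ne hpq, Matrix.updateCol_self,
            Pi.single_eq_same]
          rfl
        · show Y (e (Sum.inr 0)) (e (Sum.inr 1)) = (1 : Matrix (Fin 2) (Fin 2) ℝ) 0 1
          rw [he0, he1, hY_def, Matrix.updateCol_self, Pi.single_eq_of_ne hpq]
          rfl
        · show Y (e (Sum.inr 1)) (e (Sum.inr 0)) = (1 : Matrix (Fin 2) (Fin 2) ℝ) 1 0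
          rw [he1, he0, hY_def, Matrix.updateCol_ne hpq, Matrix.updateCol_self,
            Pi.single_eq_of_ne hpq.symm]
          rfl
        · show Y (e (Sum.inr 1)) (e (Sum.inr 1)) = (1 : Matrix (Fin 2) (Fin 2) ℝ) 1 1
          rw [he1, hY_def, Matrix.updateCol_self, Pi.single_eq_same]
          rfl

    rw [hYb, Matrix.det_fromBlocks_zero₁₂, Matrix.det_one, mul_one, hfun]
  -- determinant of A * X
  have hdetAX : (A * X).det = A.det ^ 2 *
      (A.submatrix (fun i : Fin m => Fin.castSucc (Fin.castSucc i))
        (fun j : Fin m => Fin.castSucc (Fin.castSucc j))).det := by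
    rw [hAX, Matrix.det_updateCol_smul, updateColumn_comm' _ hpq,
      Matrix.det_updateCol_smul, updateColumn_comm' _ hpq.symm, ← hY_def, hInner]
    ring
  have hXdet2 : X.det = A.det *
      (A.submatrix (fun i : Fin m => Fin.castSucc (Fin.castSucc i))
        (fun j : Fin m => Fin.castSucc (Fin.castSucc j))).det := by
    have h3 : A.det * X.det = A.det * (A.det *
        (A.submatrix (fun i : Fin m => Fin.castSucc (Fin.castSucc i))
          (fun j : Fin m => Fin.castSucc (Fin.castSucc j))).det) := by
      rw [← Matrix.det_mul, hdetAX]; ring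
    exact mul_left_cancel₀ hA h3
  -- adjugate entries as minors
  have hadjpp : adj p p = (A.submatrix (Fin.succAbove p) (Fin.succAbove p)).det := by
    rw [hadj_def, Matrix.adjugate_fin_succ_eq_det_submatrix]
    rw [hpv, Even.neg_one_pow ⟨m, by ring⟩, one_mul]
  have hadjqq : adj q q = (A.submatrix (Fin.succAbove q) (Fin.succAbove q)).det := by
    rw [hadj_def, Matrix.adjugate_fin_succ_eq_det_submatrix]
    rw [hqv, Even.neg_one_pow ⟨m + 1, by ring⟩, one_mul]
  have hadjpq : adj p q = -(A.submatrix (Fin.succAbove q) (Fin.succAbove p)).det := by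
    rw [hadj_def, Matrix.adjugate_fin_succ_eq_det_submatrix]
    rw [hqv, hpv, Odd.neg_one_pow ⟨m, by ring⟩, neg_one_mul]
  have hadjqp : adj q p = -(A.submatrix (Fin.succAbove p) (Fin.succAbove q)).det := by
    rw [hadj_def, Matrix.adjugate_fin_succ_eq_det_submatrix]
    rw [hqv, hpv, Odd.neg_one_pow ⟨m, by ring⟩, neg_one_mul]
  rw [hdetX, hadjpp, hadjqq, hadjpq, hadjqp] at hXdet2
  rw [← hXdet2]
  ring


theorem nu_contDiffOn {ψ : ℝ → ℝ} (hs : ContDiffOn ℝ (⊤ : ℕ∞) ψ (Set.Ioi 0)) (k : ℕ) :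
    ContDiffOn ℝ (⊤ : ℕ∞) (eulerOp^[k] ψ) (Set.Ioi 0) := by
  induction k with
  | zero => exact hs
  | succ k ih =>
    rw [Function.iterate_succ_apply']
    show ContDiffOn ℝ (⊤ : ℕ∞) (fun z => z * deriv (eulerOp^[k] ψ) z) (Set.Ioi 0)
    exact contDiffOn_id.mul (ih.deriv_of_isOpen isOpen_Ioi (by simp))

theorem nu_hasDerivAt {ψ : ℝ → ℝ} (hs : ContDiffOn ℝ (⊤ : ℕ∞) ψ (Set.Ioi 0)) (k : ℕ) {z : ℝ}
    (hz : z ∈ Set.Ioi (0:ℝ)) :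
    HasDerivAt (eulerOp^[k] ψ) (eulerOp^[k+1] ψ z / z) z := by
  have hz0 : z ≠ 0 := ne_of_gt hz
  have hd : DifferentiableAt ℝ (eulerOp^[k] ψ) z :=
    ((nu_contDiffOn hs k).differentiableOn (by simp)).differentiableAt
      (isOpen_Ioi.mem_nhds hz)
  have h1 : eulerOp^[k+1] ψ z = z * deriv (eulerOp^[k] ψ) z := by
    rw [Function.iterate_succ_apply']; rfl
  have := hd.hasDerivAt
  rwa [h1, mul_div_cancel_left₀ _ hz0]
noncomputable def HD (ψ : ℝ → ℝ) (n : ℕ) (r c : Fin n → ℕ) (z : ℝ) : ℝ :=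
  Matrix.det (Matrix.of fun i j : Fin n => eulerOp^[r i + c j] ψ z)

theorem HD_eq_zero {ψ : ℝ → ℝ} {n : ℕ} {r c : Fin n → ℕ} {z : ℝ} {k l : Fin n}
    (hkl : k ≠ l) (h : r k = r l) : HD ψ n r c z = 0 :=
  Matrix.det_zero_of_row_eq hkl (funext fun j => by simp [h])

theorem HD_symm (ψ : ℝ → ℝ) (n : ℕ) (r c : Fin n → ℕ) (z : ℝ) :
    HD ψ n r c z = HD ψ n c r z := by
  unfold HD
  rw [← Matrix.det_transpose]
  congr 1
  ext i j
  simp [Matrix.transpose_apply, add_comm]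

theorem hasDerivAt_HD {ψ : ℝ → ℝ} (hs : ContDiffOn ℝ (⊤ : ℕ∞) ψ (Set.Ioi 0)) {n : ℕ}
    (r c : Fin n → ℕ) {z : ℝ} (hz : z ∈ Set.Ioi (0:ℝ)) :
    HasDerivAt (HD ψ n r c)
      ((∑ i, HD ψ n (Function.update r i (r i + 1)) c z) / z) z := by
  have hz0 : z ≠ 0 := ne_of_gt hz
  have h := hasDerivAt_det (fun t => Matrix.of fun i j : Fin n => eulerOp^[r i + c j] ψ t)
    (Matrix.of fun i j : Fin n => eulerOp^[r i + c j + 1] ψ z / z) z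
    (fun i j => by simpa using nu_hasDerivAt hs (r i + c j) hz)
  have hval : (∑ i, HD ψ n (Function.update r i (r i + 1)) c z) / z
      = ∑ k, (((Matrix.of fun i j : Fin n => eulerOp^[r i + c j] ψ z)).updateRow k
          ((Matrix.of fun i j : Fin n => eulerOp^[r i + c j + 1] ψ z / z) k)).det := by
    rw [Finset.sum_div]
    refine Finset.sum_congr rfl fun i _ => ?_
    have hrow : ((Matrix.of fun i j : Fin n => eulerOp^[r i + c j + 1] ψ z / z) i)
        = z⁻¹ • (fun j => eulerOp^[r i + c j + 1] ψ z) := by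
      funext j; simp [div_eq_inv_mul]
    rw [hrow, Matrix.det_updateRow_smul]
    have hmat : ((Matrix.of fun i' j : Fin n => eulerOp^[r i' + c j] ψ z)).updateRow i
        (fun j => eulerOp^[r i + c j + 1] ψ z)
        = Matrix.of fun i' j : Fin n =>
            eulerOp^[Function.update r i (r i + 1) i' + c j] ψ z := by
      ext k j
      rcases eq_or_ne k i with rfl | hk
      · simp only [Matrix.updateRow_self, Matrix.of_apply, Function.update_self]
        have he : r k + c j + 1 = r k + 1 + c j := by omega
        rw [he]
      · rw [Matrix.updateRow_ne hk]
        simp [Function.update_of_ne hk]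
    rw [hmat]
    unfold HD
    rw [div_eq_inv_mul]
  rw [hval]
  exact h

/-- the row-shift function: identity except the last index maps to `m+1`. -/
def rsh (m : ℕ) : Fin (m+1) → ℕ := fun i => if i = Fin.last m then m + 1 else (i : ℕ)

theorem sum_update_val (ψ : ℝ → ℝ) (m : ℕ) (c : Fin (m+1) → ℕ) (z : ℝ) :
    ∑ i : Fin (m+1), HD ψ (m+1)
        (Function.update (fun i : Fin (m+1) => (i:ℕ)) i ((i:ℕ) + 1)) c z
      = HD ψ (m+1) (rsh m) c z := by
  rw [Fintype.sum_eq_single (Fin.last m)]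
  · congr 1
    funext k
    rcases eq_or_ne k (Fin.last m) with rfl | hk
    · simp [Function.update_self, rsh, Fin.val_last]
    · simp [Function.update_of_ne hk, rsh, hk]
  · intro i hi
    have hlt : (i:ℕ) < m := by
      have h1 := i.isLt
      have h2 : (i : ℕ) ≠ m := fun hc => hi (Fin.ext (by simp [hc, Fin.val_last]))
      omega
    refine HD_eq_zero (k := i) (l := ⟨(i:ℕ)+1, by omega⟩) (fun hc => ?_) ?_
    · have := congrArg Fin.val hc
      simp at this
    · have hne : (⟨(i:ℕ)+1, by omega⟩ : Fin (m+1)) ≠ i := by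
        intro hc
        have := congrArg Fin.val hc
        simp at this
      rw [Function.update_self, Function.update_of_ne hne]
theorem jacobi_HD {ψ : ℝ → ℝ} {m : ℕ} {z : ℝ}
    (hA : HD ψ (m+2) (fun i => (i:ℕ)) (fun i => (i:ℕ)) z ≠ 0) :
    HD ψ (m+2) (fun i => (i:ℕ)) (fun i => (i:ℕ)) z * HD ψ m (fun i => (i:ℕ)) (fun i => (i:ℕ)) z
      = HD ψ (m+1) (rsh m) (rsh m) z * HD ψ (m+1) (fun i => (i:ℕ)) (fun i => (i:ℕ)) z
        - HD ψ (m+1) (fun i => (i:ℕ)) (rsh m) z * HD ψ (m+1) (fun i => (i:ℕ)) (rsh m) z := by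
  set A : Matrix (Fin (m+2)) (Fin (m+2)) ℝ :=
    Matrix.of fun i j : Fin (m+2) => eulerOp^[(i:ℕ)+(j:ℕ)] ψ z with hA_def
  have hdetA : A.det = HD ψ (m+2) (fun i => (i:ℕ)) (fun i => (i:ℕ)) z := rfl
  have cvt : ∀ (k : ℕ) (f g : Fin k → Fin (m+2)) (r c : Fin k → ℕ),
      (∀ i, (f i : ℕ) = r i) → (∀ j, (g j : ℕ) = c j) →
      (A.submatrix f g).det = HD ψ k r c z := by
    intro k f g r c hf hg
    unfold HD
    congr 1
    ext i j
    simp [hA_def, hf i, hg j]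
  have h1 : ∀ j : Fin (m+1), (((Fin.last m).castSucc.succAbove j : Fin (m+2)) : ℕ)
      = rsh m j := by
    intro j
    rcases Nat.lt_or_ge (j : ℕ) m with h | h
    · have hlt : j.castSucc < (Fin.last m).castSucc := by
        rw [Fin.castSucc_lt_castSucc_iff, Fin.lt_def]
        simpa using h
      rw [Fin.succAbove_of_castSucc_lt _ _ hlt]
      have hne : j ≠ Fin.last m := by
        intro hc; rw [hc] at h; simp at h
      simp [rsh, hne]
    · have hj : j = Fin.last m := Fin.ext (by have := j.isLt; simp; omega)
      subst hj
      rw [Fin.succAbove_of_le_castSucc _ _ (le_refl _)]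
      simp [rsh]
  have h2 : ∀ j : Fin (m+1), (((Fin.last (m+1)).succAbove j : Fin (m+2)) : ℕ) = (j:ℕ) := by
    intro j; rw [Fin.succAbove_last]; simp
  have h3 : ∀ j : Fin m, ((Fin.castSucc (Fin.castSucc j) : Fin (m+2)) : ℕ) = (j : ℕ) := by
    intro j; simp
  have hj := jacobi_last_two A (by rw [hdetA]; exact hA)
  rw [cvt m _ _ (fun i => (i:ℕ)) (fun i => (i:ℕ)) h3 h3] at hj
  rw [cvt (m+1) _ _ (rsh m) (rsh m) h1 h1] at hj
  rw [cvt (m+1) _ _ (fun i => (i:ℕ)) (fun i => (i:ℕ)) h2 h2] at hj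
  rw [cvt (m+1) _ _ (fun i => (i:ℕ)) (rsh m) h2 h1] at hj
  rw [cvt (m+1) _ _ (rsh m) (fun i => (i:ℕ)) h1 h2] at hj
  rw [hdetA] at hj
  rw [hj, HD_symm ψ (m+1) (rsh m) (fun i => (i:ℕ)) z]
/-- If the moments satisfy `μ_k = δ_z^k(μ_0)` on `(0,∞)` with `μ_0` smooth, and
`W_n(μ_0) ≠ 0` for all `n` on an open interval `I ⊆ (0,∞)`, then on `I` the recurrence
coefficients are `a_n²(z) = δ_z²(ln W_n(μ_0))(z)` and
`b_n(z) = δ_z(ln(W_{n+1}(μ_0)/W_n(μ_0)))(z)`. -/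
theorem recurrence_coeffs_eq_eulerOp_log_Wdet (μ : ℕ → ℝ → ℝ) (I : Set ℝ)
    (hI : IsOpen I) (hIsub : I ⊆ Set.Ioi (0 : ℝ))
    (hsmooth : ContDiffOn ℝ (⊤ : ℕ∞) (μ 0) (Set.Ioi 0))
    (hmom : ∀ k : ℕ, ∀ z ∈ Set.Ioi (0 : ℝ), μ k z = eulerOp^[k] (μ 0) z)
    (hW : ∀ n : ℕ, ∀ z ∈ I, Wdet n (μ 0) z ≠ 0) :
    ∀ n : ℕ, ∀ z ∈ I,
      aSq μ n z = eulerOp^[2] (fun w => Real.log (Wdet n (μ 0) w)) z ∧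
      bCoef μ n z
        = eulerOp (fun w => Real.log (Wdet (n + 1) (μ 0) w / Wdet n (μ 0) w)) z := by
  intro n z hz
  have hz0 : (0:ℝ) < z := hIsub hz
  have hzI : z ∈ Set.Ioi (0:ℝ) := Set.mem_Ioi.mpr hz0
  have hzne : z ≠ 0 := ne_of_gt hz0
  set ψ := μ 0 with hψ
  have hWdetHD : ∀ k : ℕ, Wdet k ψ = HD ψ k (fun i => (i:ℕ)) (fun i => (i:ℕ)) :=
    fun k => rfl
  have hhank : ∀ (k : ℕ) (w : ℝ), w ∈ Set.Ioi (0:ℝ) →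
      hankel μ k w = HD ψ k (fun i => (i:ℕ)) (fun i => (i:ℕ)) w := by
    intro k w hw
    unfold hankel HD
    congr 1
    ext i j
    simp [hmom ((i:ℕ)+(j:ℕ)) w hw]
  have hshift : ∀ (m : ℕ) (w : ℝ), w ∈ Set.Ioi (0:ℝ) →
      hankelShift μ (m+1) w = HD ψ (m+1) (fun i => (i:ℕ)) (rsh m) w := by
    intro m w hw
    show Matrix.det _ = _
    unfold HD
    congr 1
    ext i j
    simp only [Matrix.of_apply]
    rcases eq_or_ne j (Fin.last m) with rfl | hj
    · rw [if_pos (by simp : ((Fin.last m : Fin (m+1)) : ℕ) = m)]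
      rw [hmom ((i:ℕ) + m + 1) w hw]
      have h1 : rsh m (Fin.last m) = m + 1 := by simp [rsh]
      rw [h1, show (i:ℕ) + m + 1 = (i:ℕ) + (m+1) by omega]
    · have hjm : (j : ℕ) ≠ m := fun hc => hj (Fin.ext (by simp [hc]))
      rw [if_neg hjm, hmom ((i:ℕ) + (j:ℕ)) w hw]
      have h1 : rsh m j = (j:ℕ) := by simp [rsh, hj]
      rw [h1]
  have hnonzero : ∀ k : ℕ, HD ψ k (fun i => (i:ℕ)) (fun i => (i:ℕ)) z ≠ 0 := by
    intro k
    rw [← hWdetHD k]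
    exact hW k z hz
  have hD0 : HD ψ 0 (fun i => (i:ℕ)) (fun i => (i:ℕ)) = fun _ => (1:ℝ) :=
    funext fun w => Matrix.det_fin_zero
  have hDder : ∀ (m : ℕ) (w : ℝ), w ∈ Set.Ioi (0:ℝ) →
      HasDerivAt (HD ψ (m+1) (fun i => (i:ℕ)) (fun i => (i:ℕ)))
        (HD ψ (m+1) (fun i => (i:ℕ)) (rsh m) w / w) w := by
    intro m w hw
    have h := hasDerivAt_HD hsmooth (fun i : Fin (m+1) => (i:ℕ)) (fun i => (i:ℕ)) hw
    rw [sum_update_val ψ m (fun i => (i:ℕ)) w] at h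
    rwa [HD_symm ψ (m+1) (rsh m) (fun i => (i:ℕ)) w] at h
  have hCder : ∀ (m : ℕ) (w : ℝ), w ∈ Set.Ioi (0:ℝ) →
      HasDerivAt (HD ψ (m+1) (fun i => (i:ℕ)) (rsh m))
        (HD ψ (m+1) (rsh m) (rsh m) w / w) w := by
    intro m w hw
    have h := hasDerivAt_HD hsmooth (fun i : Fin (m+1) => (i:ℕ)) (rsh m) hw
    rwa [sum_update_val ψ m (rsh m) w] at h
  have hDer : ∀ k : ℕ, ∃ Ck : ℝ → ℝ,
      (∀ w : ℝ, w ∈ Set.Ioi (0:ℝ) →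
        HasDerivAt (HD ψ k (fun i => (i:ℕ)) (fun i => (i:ℕ))) (Ck w / w) w) ∧
      (∀ w : ℝ, w ∈ Set.Ioi (0:ℝ) → hankelShift μ k w = Ck w) := by
    intro k
    cases k with
    | zero =>
      refine ⟨fun _ => 0, fun w hw => ?_, fun w _ => rfl⟩
      rw [hD0, zero_div]
      exact hasDerivAt_const w (1:ℝ)
    | succ m => exact ⟨HD ψ (m+1) (fun i => (i:ℕ)) (rsh m), hDder m, hshift m⟩
  constructor
  · -- a_n² part
    cases n with
    | zero =>
      have hw0 : (fun w => Real.log (Wdet 0 ψ w)) = fun _ => (0:ℝ) :=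
        funext fun w => by
          rw [show Wdet 0 ψ w = 1 from Matrix.det_fin_zero, Real.log_one]
      have e1 : eulerOp (fun _ => (0:ℝ)) = fun _ => (0:ℝ) :=
        funext fun w => by simp [eulerOp]
      rw [hw0, Function.iterate_fixed e1 2]
      rfl
    | succ m =>
      rw [hWdetHD (m+1)]
      have hgI : ∀ w, w ∈ I →
          HasDerivAt (fun w' => Real.log (HD ψ (m+1) (fun i => (i:ℕ)) (fun i => (i:ℕ)) w'))
            (HD ψ (m+1) (fun i => (i:ℕ)) (rsh m) w / w
              / HD ψ (m+1) (fun i => (i:ℕ)) (fun i => (i:ℕ)) w) w := by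
        intro w hw
        exact (hDder m w (hIsub hw)).log (by rw [← hWdetHD]; exact hW (m+1) w hw)
      have hEuler : ∀ w ∈ I,
          eulerOp (fun w' => Real.log (HD ψ (m+1) (fun i => (i:ℕ)) (fun i => (i:ℕ)) w')) w
            = HD ψ (m+1) (fun i => (i:ℕ)) (rsh m) w
              / HD ψ (m+1) (fun i => (i:ℕ)) (fun i => (i:ℕ)) w := by
        intro w hw
        have hwne : w ≠ 0 := ne_of_gt (hIsub hw)
        show w * deriv _ w = _
        rw [(hgI w hw).deriv]
        rw [div_div, ← mul_div_assoc, mul_div_mul_left _ _ hwne]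
      have hevq : eulerOp (fun w' => Real.log (HD ψ (m+1) (fun i => (i:ℕ)) (fun i => (i:ℕ)) w'))
          =ᶠ[nhds z] fun w => HD ψ (m+1) (fun i => (i:ℕ)) (rsh m) w
            / HD ψ (m+1) (fun i => (i:ℕ)) (fun i => (i:ℕ)) w :=
        Filter.eventuallyEq_of_mem (hI.mem_nhds hz) hEuler
      have hquot : HasDerivAt (fun w => HD ψ (m+1) (fun i => (i:ℕ)) (rsh m) w
            / HD ψ (m+1) (fun i => (i:ℕ)) (fun i => (i:ℕ)) w)
          ((HD ψ (m+1) (rsh m) (rsh m) z / z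
              * HD ψ (m+1) (fun i => (i:ℕ)) (fun i => (i:ℕ)) z
            - HD ψ (m+1) (fun i => (i:ℕ)) (rsh m) z
              * (HD ψ (m+1) (fun i => (i:ℕ)) (rsh m) z / z))
            / (HD ψ (m+1) (fun i => (i:ℕ)) (fun i => (i:ℕ)) z)^2) z :=
        (hCder m z hzI).div (hDder m z hzI) (hnonzero (m+1))
      have hit : eulerOp^[2] (fun w => Real.log (HD ψ (m+1) (fun i => (i:ℕ)) (fun i => (i:ℕ)) w))
          = eulerOp (eulerOp (fun w => Real.log (HD ψ (m+1) (fun i => (i:ℕ)) (fun i => (i:ℕ)) w))) := by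
        rw [show (2:ℕ) = 1 + 1 from rfl, Function.iterate_add, Function.iterate_one]
        rfl
      rw [hit]
      show aSq μ (m+1) z = z * deriv
        (eulerOp (fun w => Real.log (HD ψ (m+1) (fun i => (i:ℕ)) (fun i => (i:ℕ)) w))) z
      rw [hevq.deriv_eq, hquot.deriv]
      have haS : aSq μ (m+1) z
          = HD ψ (m+2) (fun i => (i:ℕ)) (fun i => (i:ℕ)) z
            * HD ψ m (fun i => (i:ℕ)) (fun i => (i:ℕ)) z
            / (HD ψ (m+1) (fun i => (i:ℕ)) (fun i => (i:ℕ)) z)^2 := by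
        show hankel μ (m+2) z * hankel μ m z / (hankel μ (m+1) z)^2 = _
        rw [hhank (m+2) z hzI, hhank m z hzI, hhank (m+1) z hzI]
      rw [haS]
      have hjac := jacobi_HD (ψ := ψ) (m := m) (z := z) (hnonzero (m+2))
      rw [hjac]
      field_simp [hzne, hnonzero (m+1)]
  · -- b_n part
    obtain ⟨Cn, hCn, hCnval⟩ := hDer n
    obtain ⟨Cn1, hCn1, hCn1val⟩ := hDer (n+1)
    rw [hWdetHD (n+1), hWdetHD n]
    have hq : HasDerivAt (fun w => HD ψ (n+1) (fun i => (i:ℕ)) (fun i => (i:ℕ)) w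
          / HD ψ n (fun i => (i:ℕ)) (fun i => (i:ℕ)) w)
        ((Cn1 z / z * HD ψ n (fun i => (i:ℕ)) (fun i => (i:ℕ)) z
          - HD ψ (n+1) (fun i => (i:ℕ)) (fun i => (i:ℕ)) z * (Cn z / z))
          / (HD ψ n (fun i => (i:ℕ)) (fun i => (i:ℕ)) z)^2) z :=
      (hCn1 z hzI).div (hCn z hzI) (hnonzero n)
    have hlog : HasDerivAt (fun w => Real.log
          (HD ψ (n+1) (fun i => (i:ℕ)) (fun i => (i:ℕ)) w
            / HD ψ n (fun i => (i:ℕ)) (fun i => (i:ℕ)) w))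
        (((Cn1 z / z * HD ψ n (fun i => (i:ℕ)) (fun i => (i:ℕ)) z
          - HD ψ (n+1) (fun i => (i:ℕ)) (fun i => (i:ℕ)) z * (Cn z / z))
          / (HD ψ n (fun i => (i:ℕ)) (fun i => (i:ℕ)) z)^2)
          / (HD ψ (n+1) (fun i => (i:ℕ)) (fun i => (i:ℕ)) z
            / HD ψ n (fun i => (i:ℕ)) (fun i => (i:ℕ)) z)) z :=
      hq.log (div_ne_zero (hnonzero (n+1)) (hnonzero n))
    show bCoef μ n z = z * deriv (fun w => Real.log
        (HD ψ (n+1) (fun i => (i:ℕ)) (fun i => (i:ℕ)) w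
          / HD ψ n (fun i => (i:ℕ)) (fun i => (i:ℕ)) w)) z
    rw [hlog.deriv]
    have hb : bCoef μ n z = Cn1 z / HD ψ (n+1) (fun i => (i:ℕ)) (fun i => (i:ℕ)) z
        - Cn z / HD ψ n (fun i => (i:ℕ)) (fun i => (i:ℕ)) z := by
      show hankelShift μ (n+1) z / hankel μ (n+1) z
          - hankelShift μ n z / hankel μ n z = _
      rw [hCnval z hzI, hCn1val z hzI, hhank (n+1) z hzI, hhank n z hzI]
    rw [hb]
    field_simp [hzne, hnonzero n, hnonzero (n+1)]
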